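/- arXiv:1708.04800 — 6 statements merged into one kernel-verified Lean document; each statement's English description precedes it below -/
import Mathlib

section
/- Let 𝒪 be an order in a number field of degree k with ℤ-basis ω₁=1,…,ω_k, let p ∈ 𝒪[x] be monic with p(0) ≠ 0, and let 𝒟 ⊂ 𝒪 be a complete residue system modulo p(0) containing 0. Then there exists a bounded fundamental domain ℱ for the action of ℤ^k on ℝ^k such that 𝒟 = (p(0)·(ℱ·ω)) ∩ 𝒪. -/
/-!
Let `V d` be the coordinate vector of `d / p(0)` in the basis `ω`. The image `V(𝒪)` is stable
under translation by `ℤ^k`, and two points `V d`, `V d'` differ by an integer vector exactly when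
`d ≡ d' mod p(0)`; hence `V(𝒟)` meets every `ℤ^k`-orbit of `V(𝒪)` exactly once. Removing
`V(𝒪)` from the unit cube `[0,1)^k` and adding `V(𝒟)` therefore yields a fundamental domain, and
it is bounded because `𝒪 / p(0)` is finite, so that the residue system `𝒟` is finite.
-/

section FundamentalDomain

variable {Λ X : Type*} [AddCommGroup Λ] [AddCommGroup X] (φ : Λ →+ X)

theorem existsUnique_sub_mem_diff_union {C S R : Set X} (hC : ∀ x, ∃! z, x - φ z ∈ C)
    (hS : ∀ x ∈ S, ∀ z, x - φ z ∈ S) (hRS : R ⊆ S) (hR : ∀ x ∈ S, ∃! z, x - φ z ∈ R) (x : X) :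
    ∃! z, x - φ z ∈ C \ S ∪ R := by
  by_cases hx : x ∈ S
  · have hmem (z : Λ) : x - φ z ∈ C \ S ∪ R ↔ x - φ z ∈ R :=
      ⟨fun h => h.resolve_left fun h' => h'.2 (hS x hx z), Or.inr⟩
    simpa only [hmem] using hR x hx
  · have hmem (z : Λ) : x - φ z ∈ C \ S ∪ R ↔ x - φ z ∈ C := by
      have hz : x - φ z ∉ S := fun h => hx (by simpa using hS _ h (-z))
      exact ⟨fun h => h.elim (·.1) fun h' => absurd (hRS h') hz, fun h => Or.inl ⟨h, hz⟩⟩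
    simpa only [hmem] using hC x

end FundamentalDomain

theorem Set.mem_diff_range_union_image_iff {α X : Type*} {f : α → X} (hf : Function.Injective f)
    (C : Set X) (D : Set α) (a : α) : f a ∈ C \ Set.range f ∪ f '' D ↔ a ∈ D := by
  refine ⟨fun h => ?_, fun h => Or.inr ⟨a, h, rfl⟩⟩
  obtain h | ⟨b, hb, hba⟩ := h
  · exact absurd ⟨a, rfl⟩ h.2
  · rwa [← hf hba]

def unitCube (ι : Type*) : Set (ι → ℝ) := Set.univ.pi fun _ => Set.Ico 0 1

theorem isBounded_unitCube (ι : Type*) [Fintype ι] : Bornology.IsBounded (unitCube ι) :=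
  Bornology.IsBounded.pi fun _ => Metric.isBounded_Ico 0 1

theorem existsUnique_sub_intCast_mem_unitCube {ι : Type*} (x : ι → ℝ) :
    ∃! z : ι → ℤ, (x - fun j => (z j : ℝ)) ∈ unitCube ι := by
  refine ⟨fun j => ⌊x j⌋, fun j _ => ?_, fun z hz => funext fun j => ?_⟩
  · exact ⟨Int.fract_nonneg (x j), Int.fract_lt_one (x j)⟩
  · obtain ⟨h0, h1⟩ := hz j trivial
    simp only [Pi.sub_apply] at h0 h1
    exact (Int.floor_eq_iff.mpr ⟨by linarith, by linarith⟩).symm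

theorem Set.Finite.of_pairwise_incongruent {R : Type*} [CommRing R] {a : R}
    [Finite (R ⧸ Ideal.span {a})] {D : Set R} (hD : ∀ d ∈ D, ∀ d' ∈ D, a ∣ d - d' → d = d') :
    D.Finite :=
  Set.Finite.of_finite_image (Set.toFinite _) fun d hd d' hd' h =>
    hD d hd d' hd' (Ideal.mem_span_singleton.mp (Ideal.Quotient.eq.mp h))

theorem Subalgebra.dvd_iff_div_mem {K R : Type*} [Field K] [CommRing R] [Algebra R K]
    {A : Subalgebra R K} {a : A} (ha : a ≠ 0) (b : A) : a ∣ b ↔ (b : K) / a ∈ A := by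
  have ha' : (a : K) ≠ 0 := by simpa using ha
  refine ⟨?_, fun h => ⟨⟨_, h⟩, Subtype.ext ?_⟩⟩
  · rintro ⟨c, rfl⟩
    simp [ha']
  · simp [mul_div_cancel₀ _ ha']

section Coordinates

variable {K ι : Type*} [Field K] [CharZero K] (w : Module.Basis ι ℚ K)

noncomputable def coordVec (x : K) : ι → ℝ := fun j => (w.repr x j : ℝ)

theorem coordVec_sub (x y : K) : coordVec w (x - y) = coordVec w x - coordVec w y := by
  ext j
  simp [coordVec]

theorem coordVec_injective : Function.Injective (coordVec w) := fun x y h =>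
  w.repr.injective <| Finsupp.ext fun j => by simpa [coordVec] using congrFun h j

theorem coordVec_eq_intCast_iff (x : K) (z : ι → ℤ) :
    coordVec w x = (fun j => (z j : ℝ)) ↔ ∀ j, w.repr x j = z j := by
  simp only [funext_iff, coordVec]
  exact forall_congr' fun j => by exact_mod_cast Iff.rfl

theorem exists_coordVec_eq_intCast [Finite ι] (z : ι → ℤ) :
    ∃ x, coordVec w x = fun j => (z j : ℝ) :=
  ⟨w.equivFun.symm fun j => z j, (coordVec_eq_intCast_iff w _ z).mpr fun j => by
    simpa only [Module.Basis.equivFun_apply] using congrFun (w.equivFun.apply_symm_apply _) j⟩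

variable {𝒪 : Subalgebra ℤ K}

theorem mem_iff_exists_coordVec_eq_intCast
    (h𝒪 : ∀ x : K, x ∈ 𝒪 ↔ ∀ j, ∃ z : ℤ, w.repr x j = z) (x : K) :
    x ∈ 𝒪 ↔ ∃ z : ι → ℤ, coordVec w x = fun j => (z j : ℝ) := by
  simp_rw [h𝒪, coordVec_eq_intCast_iff, Classical.skolem]

theorem finite_quotient_span_singleton [Finite ι]
    (h𝒪 : ∀ x : K, x ∈ 𝒪 ↔ ∀ j, ∃ z : ℤ, w.repr x j = z) {a : 𝒪} (ha : a ≠ 0) :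
    Finite (𝒪 ⧸ Ideal.span {a}) := by
  have hspan : Subalgebra.toSubmodule 𝒪 = Submodule.span ℤ (Set.range w) := by
    ext x
    simp [h𝒪, w.mem_span_iff_repr_mem ℤ, eq_comm]
  have := Module.Finite.of_basis (w.restrictScalars ℤ)
  have : Module.Finite ℤ 𝒪 :=
    Module.Finite.equiv (LinearEquiv.ofEq _ _ hspan.symm)
  exact Ideal.finiteQuotientOfFreeOfNeBot _ (by simpa using ha)

/-- `d ∈ a • (ℱ · ω)` exactly when `coordVecDiv w a d ∈ ℱ`. -/
noncomputable def coordVecDiv (a d : 𝒪) : ι → ℝ := coordVec w (d / a)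

theorem coordVecDiv_injective {a : 𝒪} (ha : a ≠ 0) : Function.Injective (coordVecDiv w a) :=
  fun d d' h => Subtype.ext <| (div_left_inj' (by simpa using ha)).mp (coordVec_injective w h)

theorem exists_coordVecDiv_sub_eq_intCast_iff
    (h𝒪 : ∀ x : K, x ∈ 𝒪 ↔ ∀ j, ∃ z : ℤ, w.repr x j = z) {a : 𝒪} (ha : a ≠ 0) (d d' : 𝒪) :
    (∃ z : ι → ℤ, coordVecDiv w a d - coordVecDiv w a d' = fun j => (z j : ℝ)) ↔ a ∣ d - d' := by
  rw [coordVecDiv, coordVecDiv, ← coordVec_sub, ← sub_div, Subalgebra.dvd_iff_div_mem ha,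
    mem_iff_exists_coordVec_eq_intCast w h𝒪, Subalgebra.coe_sub]

theorem existsUnique_sub_intCast_mem_coordVecDiv_image
    (h𝒪 : ∀ x : K, x ∈ 𝒪 ↔ ∀ j, ∃ z : ℤ, w.repr x j = z) {a : 𝒪} (ha : a ≠ 0) {D : Set 𝒪}
    (hD : ∀ β : 𝒪, ∃! d : 𝒪, d ∈ D ∧ a ∣ β - d) :
    ∀ x ∈ Set.range (coordVecDiv w a),
      ∃! z : ι → ℤ, (x - fun j => (z j : ℝ)) ∈ coordVecDiv w a '' D := by
  rintro _ ⟨d, rfl⟩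
  obtain ⟨d₀, ⟨hd₀, hdvd⟩, huniq⟩ := hD d
  obtain ⟨z, hz⟩ := (exists_coordVecDiv_sub_eq_intCast_iff w h𝒪 ha d d₀).mpr hdvd
  refine ⟨z, ⟨d₀, hd₀, by rw [← hz, sub_sub_cancel]⟩, ?_⟩
  rintro z' ⟨d', hd', hz'⟩
  have hd'dvd : a ∣ d - d' :=
    (exists_coordVecDiv_sub_eq_intCast_iff w h𝒪 ha d d').mp ⟨z', by rw [hz', sub_sub_cancel]⟩
  obtain rfl : d' = d₀ := huniq d' ⟨hd', hd'dvd⟩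
  have hcast : (fun j => (z' j : ℝ)) = fun j => (z j : ℝ) := by rw [← hz, hz', sub_sub_cancel]
  exact funext fun j => by exact_mod_cast congrFun hcast j

theorem coordVecDiv_sub_intCast_mem_range [Finite ι]
    (h𝒪 : ∀ x : K, x ∈ 𝒪 ↔ ∀ j, ∃ z : ℤ, w.repr x j = z) {a : 𝒪} (ha : a ≠ 0) :
    ∀ x ∈ Set.range (coordVecDiv w a), ∀ z : ι → ℤ,
      (x - fun j => (z j : ℝ)) ∈ Set.range (coordVecDiv w a) := by
  rintro _ ⟨d, rfl⟩ z
  obtain ⟨y, hy⟩ := exists_coordVec_eq_intCast w z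
  have hy𝒪 : y ∈ 𝒪 := (mem_iff_exists_coordVec_eq_intCast w h𝒪 y).mpr ⟨z, hy⟩
  have ha' : (a : K) ≠ 0 := by simpa using ha
  refine ⟨d - a * ⟨y, hy𝒪⟩, ?_⟩
  rw [coordVecDiv, coordVecDiv, ← hy, ← coordVec_sub]
  congr 1
  push_cast
  field_simp

end Coordinates

theorem statement1_general {K : Type*} [Field K] [NumberField K] {k : ℕ}
    (𝒪 : Subalgebra ℤ K) (w : Module.Basis (Fin k) ℚ K)
    (h𝒪 : ∀ x : K, x ∈ 𝒪 ↔ ∀ j : Fin k, ∃ z : ℤ, (w.repr x) j = (z : ℚ))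
    (p : Polynomial 𝒪) (hp0 : p.coeff 0 ≠ 0)
    (D : Set 𝒪) (hD0 : 0 ∈ D)
    (hD : ∀ β : 𝒪, ∃! d : 𝒪, d ∈ D ∧ p.coeff 0 ∣ β - d) :
    ∃ ℱ : Set (Fin k → ℝ), Bornology.IsBounded ℱ ∧ (0 : Fin k → ℝ) ∈ ℱ ∧
      (∀ x : Fin k → ℝ, ∃! z : Fin k → ℤ, (x - fun j => (z j : ℝ)) ∈ ℱ) ∧
      (∀ d : 𝒪, d ∈ D ↔
        (fun j => ((w.repr ((d : K) / (p.coeff 0 : K)) j : ℚ) : ℝ)) ∈ ℱ) := by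
  set V := coordVecDiv w (p.coeff 0)
  have : Finite (𝒪 ⧸ Ideal.span {p.coeff 0}) := finite_quotient_span_singleton w h𝒪 hp0
  have hDfin : D.Finite := Set.Finite.of_pairwise_incongruent fun d hd d' hd' hdvd =>
    (hD d).unique ⟨hd, by simp⟩ ⟨hd', hdvd⟩
  refine ⟨unitCube (Fin k) \ Set.range V ∪ V '' D, ?_, ?_, ?_, ?_⟩
  · exact ((isBounded_unitCube _).subset Set.sdiff_subset).union (hDfin.image V).isBounded
  · exact Or.inr ⟨0, hD0, by ext; simp [V, coordVecDiv, coordVec]⟩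
  · exact existsUnique_sub_mem_diff_union ((Int.castAddHom ℝ).compLeft (Fin k))
      existsUnique_sub_intCast_mem_unitCube (coordVecDiv_sub_intCast_mem_range w h𝒪 hp0)
      (Set.image_subset_range _ _) (existsUnique_sub_intCast_mem_coordVecDiv_image w h𝒪 hp0 hD)
  · exact fun d => (Set.mem_diff_range_union_image_iff (coordVecDiv_injective w hp0) _ _ d).symm

/-- Every digit set of a GNS over an order comes from a bounded fundamental
domain. Given a monic `p ∈ 𝒪[x]` with `p(0) ≠ 0` and a complete residue system `𝒟`
modulo `p(0)` containing `0`, there is a bounded fundamental domain `ℱ` for `ℤ^k` acting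
on `ℝ^k` such that `𝒟 = (p(0)·(ℱ·ω)) ∩ 𝒪`, i.e. `d ∈ 𝒟` iff the coordinate vector of
`d/p(0)` with respect to the basis `ω` lies in `ℱ`. -/
theorem statement1 {K : Type*} [Field K] [NumberField K] {k : ℕ} (hk : 0 < k)
    (𝒪 : Subalgebra ℤ K) (w : Module.Basis (Fin k) ℚ K) (hw1 : w ⟨0, hk⟩ = 1)
    (h𝒪 : ∀ x : K, x ∈ 𝒪 ↔ ∀ j : Fin k, ∃ z : ℤ, (w.repr x) j = (z : ℚ))
    (p : Polynomial 𝒪) (hp : p.Monic) (hp0 : p.coeff 0 ≠ 0)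
    (D : Set 𝒪) (hD0 : 0 ∈ D)
    (hD : ∀ β : 𝒪, ∃! d : 𝒪, d ∈ D ∧ p.coeff 0 ∣ β - d) :
    ∃ ℱ : Set (Fin k → ℝ), Bornology.IsBounded ℱ ∧ (0 : Fin k → ℝ) ∈ ℱ ∧
      (∀ x : Fin k → ℝ, ∃! z : Fin k → ℤ, (x - fun j => (z j : ℝ)) ∈ ℱ) ∧
      (∀ d : 𝒪, d ∈ D ↔
        (fun j => ((w.repr ((d : K) / (p.coeff 0 : K)) j : ℚ) : ℝ)) ∈ ℱ) :=
  statement1_general 𝒪 w h𝒪 p hp0 D hD0 hD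
end

section
/- With 𝒩 as above, define an equivalence relation on ℤ^k as the transitive-reflexive-symmetric hull of the relation 'z′ − z ∈ 𝒩'. Then all of ℤ^k forms a single equivalence class; equivalently, the Cayley-type graph on ℤ^k with edge set given by the neighbor relation of a bounded fundamental domain ℱ is connected. -/
/-- With the neighbor relation of a bounded fundamental domain `ℱ` for
`ℤ^k` acting on `ℝ^k` (`z′` is a neighbor of `z` iff `(cl(ℱ)+z) ∩ (cl(ℱ)+z′) ≠ ∅`),
the reflexive-symmetric-transitive hull of this relation has a single equivalence
class: any two points of `ℤ^k` are equivalent, i.e. the neighbor graph is connected. -/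
theorem statement3 {k : ℕ}
    (ℱ : Set (Fin k → ℝ)) (hbd : Bornology.IsBounded ℱ)
    (hfund : ∀ x : Fin k → ℝ, ∃! z : Fin k → ℤ, (x - fun j => (z j : ℝ)) ∈ ℱ) :
    ∀ z z' : Fin k → ℤ,
      Relation.EqvGen
        (fun a b : Fin k → ℤ =>
          ∃ x ∈ closure ℱ, (x - fun j => ((b - a) j : ℝ)) ∈ closure ℱ)
        z z' := by
  classical
  set R : (Fin k → ℤ) → (Fin k → ℤ) → Prop :=
    fun a b => ∃ x ∈ closure ℱ, (x - fun j => ((b - a) j : ℝ)) ∈ closure ℱ with hR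
  set c : (Fin k → ℤ) → (Fin k → ℝ) := fun w j => (w j : ℝ) with hc
  have hcsub : ∀ a b : Fin k → ℤ, c (b - a) = c b - c a := by
    intro a b; funext j; simp [hc]
  set C : Set (Fin k → ℝ) := closure ℱ with hCdef
  have hCclosed : IsClosed C := isClosed_closure
  have hCsubset : ℱ ⊆ C := subset_closure
  -- ℱ is nonempty
  obtain ⟨z₀, hz₀, -⟩ := hfund 0
  have hCne : C.Nonempty := ⟨_, hCsubset hz₀⟩
  -- translation invariance of R and of its EqvGen
  have hRinv : ∀ a b d : Fin k → ℤ, R a b → R (a + d) (b + d) := by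
    rintro a b d ⟨x, hx, hx'⟩
    refine ⟨x, hx, ?_⟩
    have : b + d - (a + d) = b - a := by ring
    rw [this]; exact hx'
  have hEinv : ∀ a b d : Fin k → ℤ, Relation.EqvGen R a b →
      Relation.EqvGen R (a + d) (b + d) := by
    intro a b d h
    induction h with
    | rel x y hxy => exact Relation.EqvGen.rel _ _ (hRinv _ _ _ hxy)
    | refl x => exact Relation.EqvGen.refl _
    | symm x y _ ih => exact ih.symm
    | trans x y z _ _ ih1 ih2 => exact ih1.trans _ _ _ ih2
  suffices h0 : ∀ z : Fin k → ℤ, Relation.EqvGen R 0 z by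
    intro z z'
    have := hEinv 0 (z' - z) z (h0 (z' - z))
    simpa using this
  -- tiles
  set T : (Fin k → ℤ) → Set (Fin k → ℝ) := fun w => {x | x - c w ∈ C} with hT
  have hTclosed : ∀ w, IsClosed (T w) := by
    intro w
    exact hCclosed.preimage (continuous_id.sub continuous_const)
  have hTne : ∀ w, (T w).Nonempty := by
    intro w
    obtain ⟨x₀, hx₀⟩ := hCne
    exact ⟨x₀ + c w, by simp [hT, hx₀]⟩
  have hTcover : ∀ x : Fin k → ℝ, ∃ w, x ∈ T w := by
    intro x
    obtain ⟨z, hz, -⟩ := hfund x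
    exact ⟨z, hCsubset hz⟩
  -- two intersecting tiles give the relation
  have hTint : ∀ w w' : Fin k → ℤ, ∀ x, x ∈ T w → x ∈ T w' → R w w' := by
    intro w w' x hx hx'
    refine ⟨x - c w, hx, ?_⟩
    have : x - c w - (fun j => ((w' - w) j : ℝ)) = x - c w' := by
      have := hcsub w w'
      simp only [hc] at this ⊢
      rw [show (fun j => ((w' - w) j : ℝ)) = c (w' - w) from rfl, hcsub]
      abel
    rw [this]; exact hx'
  -- the family of tiles is locally finite
  obtain ⟨r, hr⟩ := hbd.closure.subset_closedBall 0
  have hLF : LocallyFinite T := by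
    intro x
    refine ⟨Metric.ball x 1, Metric.ball_mem_nhds x one_pos, ?_⟩
    set M : ℤ := ⌈r + 1 + ‖x‖⌉ with hM
    have hsub : {w | (T w ∩ Metric.ball x 1).Nonempty} ⊆
        Set.pi Set.univ (fun _ : Fin k => Set.Icc (-M) M) := by
      rintro w ⟨y, hy, hy'⟩
      intro j _
      have h1 : ‖y - c w‖ ≤ r := by
        have := hr hy
        simpa [Metric.mem_closedBall, dist_eq_norm] using this
      have h2 : ‖y - x‖ < 1 := by
        simpa [Metric.mem_ball, dist_eq_norm] using hy'
      have h3 : ‖c w‖ ≤ r + 1 + ‖x‖ := by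
        have : c w = -(y - c w) + (y - x) + x := by abel
        calc ‖c w‖ = ‖-(y - c w) + (y - x) + x‖ := by rw [← this]
          _ ≤ ‖-(y - c w) + (y - x)‖ + ‖x‖ := norm_add_le _ _
          _ ≤ ‖-(y - c w)‖ + ‖y - x‖ + ‖x‖ := by gcongr; exact norm_add_le _ _
          _ = ‖y - c w‖ + ‖y - x‖ + ‖x‖ := by rw [norm_neg]
          _ ≤ r + 1 + ‖x‖ := by nlinarith
      have h4 : |(w j : ℝ)| ≤ r + 1 + ‖x‖ := by
        calc |(w j : ℝ)| = ‖c w j‖ := by simp [hc]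
          _ ≤ ‖c w‖ := norm_le_pi_norm _ _
          _ ≤ _ := h3
      have h5 : |(w j : ℝ)| ≤ (M : ℝ) := h4.trans (Int.le_ceil _)
      have h6 : |w j| ≤ M := by
        have : ((|w j| : ℤ) : ℝ) ≤ ((M : ℤ) : ℝ) := by push_cast; exact h5
        exact_mod_cast this
      rw [abs_le] at h6
      exact ⟨h6.1, h6.2⟩
    exact ((Set.Finite.pi (fun _ => Set.finite_Icc _ _)).subset hsub)
  -- the set of points equivalent to 0
  set S : Set (Fin k → ℤ) := {w | Relation.EqvGen R 0 w} with hS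
  have h0S : (0 : Fin k → ℤ) ∈ S := Relation.EqvGen.refl _
  set U : Set (Fin k → ℝ) := ⋃ w : S, T w with hU
  set V : Set (Fin k → ℝ) := ⋃ w : {w // w ∉ S}, T w with hV
  have hUclosed : IsClosed U :=
    (hLF.comp_injective Subtype.val_injective).isClosed_iUnion
      (fun w => hTclosed _)
  have hVclosed : IsClosed V :=
    (hLF.comp_injective Subtype.val_injective).isClosed_iUnion
      (fun w => hTclosed _)
  have hcover : U ∪ V = Set.univ := by
    ext x
    simp only [Set.mem_union, Set.mem_univ, iff_true, hU, hV, Set.mem_iUnion]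
    obtain ⟨w, hw⟩ := hTcover x
    by_cases hwS : w ∈ S
    · exact Or.inl ⟨⟨w, hwS⟩, hw⟩
    · exact Or.inr ⟨⟨w, hwS⟩, hw⟩
  have hdisj : U ∩ V = ∅ := by
    ext x
    simp only [Set.mem_inter_iff, Set.mem_empty_iff_false, iff_false, not_and]
    intro hxU hxV
    simp only [hU, hV, Set.mem_iUnion] at hxU hxV
    obtain ⟨⟨w, hwS⟩, hw⟩ := hxU
    obtain ⟨⟨w', hw'S⟩, hw'⟩ := hxV
    exact hw'S (hwS.trans _ _ _ (Relation.EqvGen.rel _ _ (hTint w w' x hw hw')))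
  have hUopen : IsOpen U := by
    have : U = Vᶜ := by
      apply Set.eq_of_subset_of_subset
      · intro x hx hxV
        have : x ∈ U ∩ V := ⟨hx, hxV⟩
        rw [hdisj] at this; exact this
      · intro x hx
        have : x ∈ U ∪ V := hcover ▸ Set.mem_univ x
        rcases this with h | h
        · exact h
        · exact absurd h hx
    rw [this]; exact hVclosed.isOpen_compl
  have hUne : U.Nonempty := by
    obtain ⟨x, hx⟩ := hTne 0
    exact ⟨x, Set.mem_iUnion.mpr ⟨⟨0, h0S⟩, hx⟩⟩
  have hUuniv : U = Set.univ := by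
    rcases (isClopen_iff.mp ⟨hUclosed, hUopen⟩) with h | h
    · exact absurd h (Set.nonempty_iff_ne_empty.mp hUne)
    · exact h
  -- conclude
  intro z
  obtain ⟨x, hx⟩ := hTne z
  have hxU : x ∈ U := hUuniv ▸ Set.mem_univ x
  obtain ⟨⟨w, hwS⟩, hw⟩ := Set.mem_iUnion.mp hxU
  exact hwS.trans _ _ _ (Relation.EqvGen.rel _ _ (hTint w z x hw hx))
end

section
/- Let (p,𝒟) be a GNS over an order 𝒪 and let Δ ⊂ 𝒪 be a finite set containing 0 that generates 𝒪 as an additive semigroup. Then (p,𝒟) has the finiteness property if and only if for every a ∈ R(p,𝒟) and every α ∈ Δ one has a + α ∈ R(p,𝒟), where R(p,𝒟) is the set of polynomials in 𝒪[x] admitting a finite digit representation modulo p. -/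
/-!
The set of polynomials with a digit representation contains `0` and is closed under
`a ↦ a * X` (shift the digits, using `0 ∈ D`). Closure under `a ↦ a + C α` for the generators
`α ∈ Δ` propagates to every `α ∈ 𝒪` along the additive closure, and then every polynomial is
reached by Horner's scheme.
-/

open Polynomial

/-- `D` is a complete residue system modulo `ϑ` containing `0`. -/
def IsCRS {R : Type*} [CommRing R] (ϑ : R) (D : Set R) : Prop :=
  0 ∈ D ∧ ∀ β : R, ∃! d : R, d ∈ D ∧ ϑ ∣ β - d

/-- `a` admits a finite digit representation modulo `p` with digits in `D`. -/
def HasRep {R : Type*} [CommRing R] (p : Polynomial R) (D : Set R) (a : Polynomial R) : Prop :=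
  ∃ (ℓ : ℕ) (d : ℕ → R), (∀ j < ℓ, d j ∈ D) ∧
    p ∣ a - ∑ j ∈ Finset.range ℓ, Polynomial.C (d j) * Polynomial.X ^ j

/-- The GNS `(p, D)` has the finiteness property. -/
def FinitenessProperty {R : Type*} [CommRing R] (p : Polynomial R) (D : Set R) : Prop :=
  ∀ a : Polynomial R, HasRep p D a

namespace HasRep

variable {R : Type*} [CommRing R] {p : R[X]} {D : Set R}

theorem zero : HasRep p D 0 :=
  ⟨0, fun _ => 0, by simp, by simp⟩

theorem mul_X (h0 : (0 : R) ∈ D) {a : R[X]} (ha : HasRep p D a) : HasRep p D (a * X) := by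
  obtain ⟨ℓ, d, hd, hdvd⟩ := ha
  refine ⟨ℓ + 1, fun | 0 => 0 | j + 1 => d j, ?_, ?_⟩
  · rintro (_ | j) hj
    exacts [h0, hd j (by omega)]
  · have hshift : ∑ j ∈ Finset.range (ℓ + 1),
          C ((fun | 0 => 0 | j + 1 => d j : ℕ → R) j) * X ^ j
        = (∑ j ∈ Finset.range ℓ, C (d j) * X ^ j) * X := by
      simp [Finset.sum_range_succ', Finset.sum_mul, pow_succ, mul_assoc]
    rw [hshift, ← sub_mul]
    exact hdvd.mul_right X

theorem add_C_of_mem_closure {S : Set R}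
    (hS : ∀ a, HasRep p D a → ∀ α ∈ S, HasRep p D (a + C α))
    {α : R} (hα : α ∈ AddSubmonoid.closure S) {a : R[X]} (ha : HasRep p D a) :
    HasRep p D (a + C α) := by
  induction hα using AddSubmonoid.closure_induction generalizing a with
  | mem β hβ => exact hS a ha β hβ
  | zero => simpa using ha
  | add β γ _ _ ihβ ihγ => simpa [C_add, add_assoc] using ihγ (ihβ ha)

end HasRep

theorem finitenessProperty_of_forall_add_C {R : Type*} [CommRing R] {p : R[X]} {D : Set R}
    (h0 : (0 : R) ∈ D) (hC : ∀ a, HasRep p D a → ∀ α, HasRep p D (a + C α)) :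
    FinitenessProperty p D := by
  intro a
  induction a using Polynomial.recOnHorner with
  | M0 => exact HasRep.zero
  | MC q α _ _ ih => exact hC q ih α
  | MX q _ ih => exact ih.mul_X h0

theorem statement8_general {K : Type*} [Field K] (𝒪 : Subalgebra ℤ K)
    (p : Polynomial 𝒪)
    (D : Set 𝒪) (hD : IsCRS (p.coeff 0) D)
    (Δ : Finset 𝒪)
    (hgen : AddSubmonoid.closure (Δ : Set 𝒪) = ⊤) :
    FinitenessProperty p D ↔
      ∀ a : Polynomial 𝒪, HasRep p D a → ∀ α ∈ Δ, HasRep p D (a + Polynomial.C α) := by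
  refine ⟨fun hfin a _ α _ => hfin _, fun hΔ => ?_⟩
  refine finitenessProperty_of_forall_add_C hD.1 fun a ha α => ?_
  exact HasRep.add_C_of_mem_closure hΔ (hgen ▸ AddSubmonoid.mem_top α) ha

/-- Let `(p, 𝒟)` be a GNS over an order `𝒪` and let `Δ ⊂ 𝒪` be a finite
set containing `0` that generates `𝒪` as an additive semigroup. Then `(p, 𝒟)` has the
finiteness property iff for every `a ∈ R(p,𝒟)` and every `α ∈ Δ` we have
`a + α ∈ R(p,𝒟)`. -/
theorem statement8 {K : Type*} [Field K] [NumberField K] (𝒪 : Subalgebra ℤ K)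
    (p : Polynomial 𝒪) (hp : p.Monic)
    (D : Set 𝒪) (hD : IsCRS (p.coeff 0) D)
    (Δ : Finset 𝒪) (hΔ0 : (0 : 𝒪) ∈ Δ)
    (hgen : AddSubmonoid.closure (Δ : Set 𝒪) = ⊤) :
    FinitenessProperty p D ↔
      ∀ a : Polynomial 𝒪, HasRep p D a → ∀ α ∈ Δ, HasRep p D (a + Polynomial.C α) :=
  statement8_general 𝒪 p D hD Δ hgen
end

section
/- Let p(x) = x^n + p_{n−1}x^{n−1} + ⋯ + p₀ ∈ 𝒪[x] be monic (set p_n = 1), let 𝒟 be a complete residue system modulo p₀ containing 0, let Δ ⊂ 𝒪 be a finite set containing 0 and 1 that generates 𝒪 as an additive semigroup, and set Z = { ∑_{j=1}^n δ_j p_j : δ_j ∈ Δ }. Assume (i) Z + 𝒟 ⊆ 𝒟 + p₀Δ, (ii) Z ⊆ 𝒟 ∪ (𝒟 − p₀), and (iii) { ∑_{j∈J} p_j : J ⊆ {1,…,n} } ⊆ 𝒟. Then (p,𝒟) has the finiteness property, i.e., every a ∈ 𝒪[x] is congruent modulo p to a polynomial with all coefficients in 𝒟. -/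
open Polynomial

namespace Statement9Aux

variable {R : Type*} [AddCommMonoid R]

/-- Sums of `k` elements of `S`. -/
def sumsOf (S : Set R) (k : ℕ) : Set R :=
  {x | ∃ f : ℕ → R, (∀ i, f i ∈ S) ∧ x = ∑ i ∈ Finset.range k, f i}

theorem sumsOf_zero_mem {S : Set R} (h0 : (0:R) ∈ S) (k : ℕ) : (0:R) ∈ sumsOf S k :=
  ⟨fun _ => 0, fun _ => h0, by simp⟩

theorem eq_zero_of_mem_sumsOf_zero {S : Set R} {x : R} (h : x ∈ sumsOf S 0) : x = 0 := by
  obtain ⟨f, -, rfl⟩ := h; simp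

theorem sumsOf_mono {S : Set R} (h0 : (0:R) ∈ S) {k m : ℕ} (hkm : k ≤ m) :
    sumsOf S k ⊆ sumsOf S m := by
  rintro x ⟨f, hf, rfl⟩
  refine ⟨fun i => if i < k then f i else 0,
    fun i => by by_cases h : i < k <;> simp [h, hf i, h0], ?_⟩
  rw [← Finset.sum_subset (Finset.range_subset_range.mpr hkm) (fun i _ hi => by
    simp only [Finset.mem_range] at hi; simp [hi])]
  exact Finset.sum_congr rfl fun i hi => by simp [Finset.mem_range.mp hi]

theorem sumsOf_cons {S : Set R} {z y : R} {k : ℕ} (hz : z ∈ S) (hy : y ∈ sumsOf S k) :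
    z + y ∈ sumsOf S (k + 1) := by
  obtain ⟨f, hf, rfl⟩ := hy
  refine ⟨fun i => if i < k then f i else z,
    fun i => by by_cases h : i < k <;> simp [h, hf i, hz], ?_⟩
  rw [Finset.sum_range_succ]
  simp only [lt_irrefl, if_neg, if_false]
  rw [add_comm]
  congr 1
  exact (Finset.sum_congr rfl fun i hi => by simp [Finset.mem_range.mp hi]).symm

theorem sumsOf_succ {S : Set R} {x : R} {k : ℕ} (h : x ∈ sumsOf S (k + 1)) :
    ∃ y ∈ sumsOf S k, ∃ z ∈ S, x = y + z := by
  obtain ⟨f, hf, rfl⟩ := h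
  exact ⟨∑ i ∈ Finset.range k, f i, ⟨f, hf, rfl⟩, f k, hf k, Finset.sum_range_succ f k⟩

theorem sumsOf_add {S : Set R} {x y : R} {A B : ℕ}
    (hx : x ∈ sumsOf S A) (hy : y ∈ sumsOf S B) : x + y ∈ sumsOf S (A + B) := by
  induction B generalizing y with
  | zero => obtain rfl := eq_zero_of_mem_sumsOf_zero hy; simpa using hx
  | succ B ih =>
      obtain ⟨y', hy', z, hz, rfl⟩ := sumsOf_succ hy
      have h2 := sumsOf_cons hz (ih hy')
      have : z + (x + y') = x + (y' + z) := by
        rw [add_comm z (x + y'), add_assoc]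
      rw [this] at h2
      exact h2

theorem sumsOf_subset {S S' : Set R} (h : S ⊆ S') (k : ℕ) : sumsOf S k ⊆ sumsOf S' k := by
  rintro x ⟨f, hf, rfl⟩; exact ⟨f, fun i => h (hf i), rfl⟩

theorem sumsOf_list {S : Set R} (h0 : (0:R) ∈ S) (l : List R) (h : ∀ y ∈ l, y ∈ S) :
    l.sum ∈ sumsOf S l.length := by
  induction l with
  | nil => exact ⟨fun _ => 0, fun _ => h0, by simp⟩
  | cons z l ih =>
      simp only [List.sum_cons, List.length_cons]
      exact sumsOf_cons (h z (by simp)) (ih fun y hy => h y (by simp [hy]))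

end Statement9Aux

open Statement9Aux

set_option maxHeartbeats 1600000 in
/-- Abstract dominant condition. Let `p = x^n + p_{n−1}x^{n−1} + ⋯ + p₀`
be monic over an order `𝒪` (so `p_n = 1`), `𝒟` a complete residue system mod `p₀`
containing `0`, `Δ ⊂ 𝒪` finite with `0, 1 ∈ Δ` generating `𝒪` as an additive
semigroup, and `Z = { ∑_{j=1}^n δ_j p_j : δ_j ∈ Δ }`. If
(i) `Z + 𝒟 ⊆ 𝒟 + p₀Δ`, (ii) `Z ⊆ 𝒟 ∪ (𝒟 − p₀)`, and
(iii) `{ ∑_{j∈J} p_j : J ⊆ {1,…,n} } ⊆ 𝒟`, then `(p, 𝒟)` has the finiteness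
property. -/
theorem statement9 {K : Type*} [Field K] [NumberField K] (𝒪 : Subalgebra ℤ K)
    (p : Polynomial 𝒪) (hp : p.Monic) (n : ℕ) (hn : p.natDegree = n)
    (D : Set 𝒪) (hD : IsCRS (p.coeff 0) D)
    (Δ : Finset 𝒪) (hΔ0 : (0 : 𝒪) ∈ Δ) (hΔ1 : (1 : 𝒪) ∈ Δ)
    (hgen : AddSubmonoid.closure (Δ : Set 𝒪) = ⊤)
    (Z : Set 𝒪)
    (hZ : Z = {z : 𝒪 | ∃ δ : ℕ → 𝒪, (∀ j, δ j ∈ Δ) ∧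
      z = ∑ j ∈ Finset.Icc 1 n, δ j * p.coeff j})
    (hi : ∀ z ∈ Z, ∀ d ∈ D, ∃ d' ∈ D, ∃ δ ∈ Δ, z + d = d' + p.coeff 0 * δ)
    (hii : ∀ z ∈ Z, z ∈ D ∨ ∃ d ∈ D, z = d - p.coeff 0)
    (hiii : ∀ J ⊆ Finset.Icc 1 n, (∑ j ∈ J, p.coeff j) ∈ D) :
    FinitenessProperty p D := by
  classical
  obtain ⟨hD0, hDu⟩ := hD
  intro a
  -- Degenerate case: n = 0, then p = 1
  rcases Nat.eq_zero_or_pos n with hn0 | hn1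
  · have hp1 : p = 1 := hp.natDegree_eq_zero.mp (by rw [hn, hn0])
    exact ⟨0, fun _ => 0, fun j hj => absurd hj (Nat.not_lt_zero j),
      by rw [hp1]; exact one_dvd _⟩
  set ϑ : 𝒪 := p.coeff 0 with hϑdef
  -- Degenerate case: ϑ = 0, then D = univ
  by_cases hθ0 : ϑ = 0
  · have hDall : ∀ β : 𝒪, β ∈ D := by
      intro β
      obtain ⟨dx, ⟨hdx, hdvd⟩, -⟩ := hDu β
      rw [hθ0, zero_dvd_iff, sub_eq_zero] at hdvd
      rwa [hdvd]
    refine ⟨a.natDegree + 1, fun j => a.coeff j, fun j _ => hDall _, ?_⟩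
    have : a = ∑ i ∈ Finset.range (a.natDegree + 1), C (a.coeff i) * X ^ i := by
      simp only [Polynomial.C_mul_X_pow_eq_monomial]
      exact Polynomial.as_sum_range' a _ (Nat.lt_succ_self _)
    rw [← this]; simp
  -- MAIN CASE
  -- cancellation by ϑ
  have hcan : ∀ x y : 𝒪, ϑ * x = ϑ * y → x = y := by
    intro x y h
    have h' : (ϑ:K) * x = (ϑ:K) * y := by exact_mod_cast congrArg Subtype.val h
    have hθK : (ϑ : K) ≠ 0 := fun hh => hθ0 (Subtype.ext (by simpa using hh))
    exact Subtype.ext (mul_left_cancel₀ hθK h')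
  -- uniqueness of residues
  have huniq : ∀ x y : 𝒪, x ∈ D → y ∈ D → ϑ ∣ x - y → x = y := by
    intro x y hx hy hxy
    obtain ⟨d, -, hu⟩ := hDu x
    have h1 : x = d := hu x ⟨hx, by simp⟩
    have h2 : y = d := hu y ⟨hy, hxy⟩
    rw [h1, h2]
  -- digit and carry functions
  have hex : ∀ β : 𝒪, ∃ dq : 𝒪 × 𝒪, dq.1 ∈ D ∧ β = dq.1 + ϑ * dq.2 := by
    intro β
    obtain ⟨dx, ⟨hdx, q, hq⟩, -⟩ := hDu β
    exact ⟨(dx, q), hdx, by rw [← hq]; ring⟩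
  choose dqf hdqD hdqEq using hex
  set dd : 𝒪 → 𝒪 := fun β => (dqf β).1 with hdd_def
  set cc : 𝒪 → 𝒪 := fun β => (dqf β).2 with hcc_def
  have hdd : ∀ β, dd β ∈ D := fun β => hdqD β
  have hrep : ∀ β : 𝒪, β = dd β + ϑ * cc β := fun β => hdqEq β
  -- membership in Z
  have hZmem : ∀ δf : ℕ → 𝒪, (∀ j, δf j ∈ Δ) →
      (∑ j ∈ Finset.Icc 1 n, δf j * p.coeff j) ∈ Z := by
    intro δf hδf; rw [hZ]; exact ⟨δf, hδf, rfl⟩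
  have hpn : p.coeff n = 1 := by rw [← hn]; exact hp.coeff_natDegree
  have hΔZ : ∀ δ : 𝒪, δ ∈ Δ → δ ∈ Z := by
    intro δ hδ
    have := hZmem (fun j => if j = n then δ else 0)
      (fun j => by by_cases h : j = n <;> simp [h, hδ, hΔ0])
    have heq : (∑ j ∈ Finset.Icc 1 n, (if j = n then δ else 0) * p.coeff j) = δ := by
      rw [Finset.sum_congr rfl (g := fun j => if j = n then δ * p.coeff j else 0)
        (fun j _ => by by_cases h : j = n <;> simp [h])]
      rw [Finset.sum_ite_eq' (Finset.Icc 1 n) n (fun j => δ * p.coeff j),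
        if_pos (Finset.mem_Icc.mpr ⟨hn1, le_refl n⟩), hpn, mul_one]
    rwa [heq] at this
  have hZ0 : (0:𝒪) ∈ Z := hΔZ 0 hΔ0
  -- sum sets
  set SD : ℕ → Set 𝒪 := fun k => sumsOf (Δ : Set 𝒪) k with hSD_def
  set SZ : ℕ → Set 𝒪 := fun k => sumsOf Z k with hSZ_def
  have hΔ0' : (0:𝒪) ∈ (Δ : Set 𝒪) := by exact_mod_cast hΔ0
  have hSD0 : ∀ k, (0:𝒪) ∈ SD k := fun k => sumsOf_zero_mem hΔ0' k
  have hSZ0 : ∀ k, (0:𝒪) ∈ SZ k := fun k => sumsOf_zero_mem hZ0 k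
  have hSDmono : ∀ {k m : ℕ}, k ≤ m → SD k ⊆ SD m := fun hkm => sumsOf_mono hΔ0' hkm
  have hSDZ : ∀ k, SD k ⊆ SZ k := fun k => sumsOf_subset (fun u hu => hΔZ u hu) k
  -- FOLD1 : iterated use of (i)
  have fold1 : ∀ (k : ℕ) (u e : 𝒪), u ∈ SZ k → e ∈ D →
      ∃ A α, A ∈ D ∧ α ∈ SD k ∧ u + e = A + ϑ * α := by
    intro k
    induction k with
    | zero =>
        intro u e hu he
        obtain rfl := eq_zero_of_mem_sumsOf_zero hu
        exact ⟨e, 0, he, hSD0 0, by ring⟩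
    | succ k ih =>
        intro u e hu he
        obtain ⟨u', hu', z, hz, rfl⟩ := sumsOf_succ hu
        obtain ⟨A', α', hA', hα', heq'⟩ := ih u' e hu' he
        obtain ⟨A, hA, δ, hδ, heq⟩ := hi z hz A' hA'
        refine ⟨A, δ + α', hA, sumsOf_cons hδ hα', ?_⟩
        calc u' + z + e = (u' + e) + z := by ring
          _ = A' + ϑ * α' + z := by rw [heq']
          _ = (z + A') + ϑ * α' := by ring
          _ = A + ϑ * δ + ϑ * α' := by rw [heq]
          _ = A + ϑ * (δ + α') := by ring
  -- FOLD2 : (ii) once then (i) iterated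
  have fold2 : ∀ (k : ℕ) (u : 𝒪), u ∈ SZ (k+1) →
      ∃ A γ ε, A ∈ D ∧ γ ∈ SD k ∧ (ε = (0:𝒪) ∨ ε = 1) ∧ u = A + ϑ * (γ - ε) := by
    intro k
    induction k with
    | zero =>
        intro u hu
        obtain ⟨u', hu', z, hz, rfl⟩ := sumsOf_succ hu
        obtain rfl := eq_zero_of_mem_sumsOf_zero hu'
        rcases hii z hz with hzD | ⟨e, heD, heq⟩
        · exact ⟨z, 0, 0, hzD, hSD0 0, Or.inl rfl, by ring⟩
        · exact ⟨e, 0, 1, heD, hSD0 0, Or.inr rfl, by rw [heq]; ring⟩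
    | succ k ih =>
        intro u hu
        obtain ⟨u', hu', z, hz, rfl⟩ := sumsOf_succ hu
        obtain ⟨A', γ', ε, hA', hγ', hε, heq'⟩ := ih u' hu'
        obtain ⟨A, hA, δ, hδ, heq⟩ := hi z hz A' hA'
        refine ⟨A, δ + γ', ε, hA, sumsOf_cons hδ hγ', hε, ?_⟩
        calc u' + z = (A' + ϑ * (γ' - ε)) + z := by rw [heq']
          _ = (z + A') + ϑ * (γ' - ε) := by ring
          _ = A + ϑ * δ + ϑ * (γ' - ε) := by rw [heq]
          _ = A + ϑ * (δ + γ' - ε) := by ring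
  -- subset sums of coefficients are digits
  have hsubsum : ∀ εf : ℕ → 𝒪, (∀ j, εf j = 0 ∨ εf j = 1) →
      (∑ j ∈ Finset.Icc 1 n, p.coeff j * εf j) ∈ D := by
    intro εf hεf
    have hsplit : (∑ j ∈ Finset.Icc 1 n, p.coeff j * εf j)
        = ∑ j ∈ (Finset.Icc 1 n).filter (fun j => εf j = 1), p.coeff j := by
      rw [← Finset.sum_filter_add_sum_filter_not (Finset.Icc 1 n) (fun j => εf j = 1)
        (fun j => p.coeff j * εf j)]
      have h2 : ∑ j ∈ (Finset.Icc 1 n).filter (fun j => ¬ εf j = 1), p.coeff j * εf j = 0 :=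
        Finset.sum_eq_zero fun j hj => by
          rcases hεf j with h | h
          · rw [h, mul_zero]
          · exact absurd h (Finset.mem_filter.mp hj).2
      rw [h2, add_zero]
      exact Finset.sum_congr rfl fun j hj => by
        rw [(Finset.mem_filter.mp hj).2, mul_one]
    rw [hsplit]; exact hiii _ (Finset.filter_subset _ _)
  -- regrouping a window of Δ-sums into a Z-sum
  have regroup : ∀ (m : ℕ) (F : ℕ → 𝒪), (∀ j, F j ∈ SD m) →
      (∑ j ∈ Finset.Icc 1 n, p.coeff j * F j) ∈ SZ m := by
    intro m F hF
    choose f hfΔ hfsum using hF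
    refine ⟨fun i => ∑ j ∈ Finset.Icc 1 n, p.coeff j * f j i, fun i => ?_, ?_⟩
    · have hmem := hZmem (fun j => f j i) (fun j => hfΔ j i)
      have : (∑ j ∈ Finset.Icc 1 n, f j i * p.coeff j)
          = ∑ j ∈ Finset.Icc 1 n, p.coeff j * f j i :=
        Finset.sum_congr rfl fun j _ => mul_comm _ _
      rwa [this] at hmem
    · calc ∑ j ∈ Finset.Icc 1 n, p.coeff j * F j
          = ∑ j ∈ Finset.Icc 1 n, ∑ i ∈ Finset.range m, p.coeff j * f j i := by
            exact Finset.sum_congr rfl fun j _ => by rw [hfsum j, Finset.mul_sum]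
        _ = ∑ i ∈ Finset.range m, ∑ j ∈ Finset.Icc 1 n, p.coeff j * f j i := Finset.sum_comm
  -- the backward division orbit
  set step : Polynomial 𝒪 → Polynomial 𝒪 :=
    fun b => (b - C (dd (b.coeff 0)) - C (cc (b.coeff 0)) * p).divX with hstep_def
  set B : ℕ → Polynomial 𝒪 := fun t => step^[t] a with hB_def
  set c : ℕ → 𝒪 := fun t => cc ((B t).coeff 0) with hc_def
  set d : ℕ → 𝒪 := fun t => dd ((B t).coeff 0) with hd_def
  have hdD : ∀ t, d t ∈ D := fun t => hdqD _
  have key0 : ∀ t, B t = C (d t) + C (c t) * p + X * B (t+1) := by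
    intro t
    have hBs : B (t+1) = step (B t) := Function.iterate_succ_apply' step t a
    set w : Polynomial 𝒪 := B t - C (d t) - C (c t) * p with hw
    have hw0 : w.coeff 0 = 0 := by
      have hr := hrep ((B t).coeff 0)
      simp only [hw, coeff_sub, coeff_C_mul, coeff_C_zero]
      rw [hϑdef] at hr
      rw [hd_def, hc_def, hr]
      ring
    have hdiv : w.divX * X + C (w.coeff 0) = w := Polynomial.divX_mul_X_add w
    rw [hw0, map_zero, add_zero] at hdiv
    have hB1 : B (t+1) = w.divX := by rw [hBs]
    rw [hB1]
    have : X * w.divX = w := by rw [mul_comm]; exact hdiv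
    rw [this, hw]; ring
  have key1 : ∀ T i, (B T).coeff i
      = a.coeff (T+i) - ∑ s ∈ Finset.range T, c s * p.coeff (T + i - s) := by
    intro T
    induction T with
    | zero =>
        intro i
        have : B 0 = a := rfl
        rw [this]; simp
    | succ T ih =>
        intro i
        have h0 := key0 T
        have hcoeffs : (B T).coeff (i+1)
            = (C (d T)).coeff (i+1) + (c T) * p.coeff (i+1) + (B (T+1)).coeff i := by
          rw [h0]
          simp [coeff_add, coeff_C_mul, Polynomial.coeff_X_mul]
        rw [coeff_C] at hcoeffs
        simp only [Nat.succ_ne_zero, if_false] at hcoeffs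
        have hBT1 : (B (T+1)).coeff i = (B T).coeff (i+1) - c T * p.coeff (i+1) := by
          rw [hcoeffs]; ring
        rw [hBT1, ih (i+1), Finset.sum_range_succ]
        have h1 : T + (i+1) = T + 1 + i := by omega
        have h2 : T + 1 + i - T = i + 1 := by omega
        rw [h1, h2]
        ring
  have key2 : ∀ T, a = (∑ s ∈ Finset.range T, C (d s) * X ^ s)
      + p * (∑ s ∈ Finset.range T, C (c s) * X ^ s) + X ^ T * B T := by
    intro T
    induction T with
    | zero => simp [hB_def]
    | succ T ih =>
        rw [Finset.sum_range_succ, Finset.sum_range_succ]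
        have h0 := key0 T
        calc a = (∑ s ∈ Finset.range T, C (d s) * X ^ s)
              + p * (∑ s ∈ Finset.range T, C (c s) * X ^ s) + X ^ T * B T := ih
          _ = (∑ s ∈ Finset.range T, C (d s) * X ^ s)
              + p * (∑ s ∈ Finset.range T, C (c s) * X ^ s)
              + X ^ T * (C (d T) + C (c T) * p + X * B (T+1)) := by rw [← h0]
          _ = ((∑ s ∈ Finset.range T, C (d s) * X ^ s) + C (d T) * X ^ T)
              + p * ((∑ s ∈ Finset.range T, C (c s) * X ^ s) + C (c T) * X ^ T)
              + X ^ (T+1) * B (T+1) := by ring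
  -- the window form of the recurrence
  set cw : ℕ → ℕ → 𝒪 := fun t j => if j ≤ t then c (t - j) else 0 with hcw_def
  have key3 : ∀ t, ∑ s ∈ Finset.range t, c s * p.coeff (t - s)
      = ∑ j ∈ Finset.Icc 1 n, p.coeff j * cw t j := by
    intro t
    have h1 : ∑ s ∈ Finset.range t, c s * p.coeff (t - s)
        = ∑ j ∈ Finset.range t, c (t - 1 - j) * p.coeff (t - (t - 1 - j)) :=
      (Finset.sum_range_reflect (fun s => c s * p.coeff (t - s)) t).symm
    have h1' : ∑ j ∈ Finset.range t, c (t - 1 - j) * p.coeff (t - (t - 1 - j))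
        = ∑ j ∈ Finset.range t, c (t - 1 - j) * p.coeff (j + 1) := by
      refine Finset.sum_congr rfl fun j hj => ?_
      have hj' := Finset.mem_range.mp hj
      congr 2
      omega
    have h2 : ∑ j ∈ Finset.Icc 1 t, p.coeff j * cw t j
        = ∑ j ∈ Finset.range t, c (t - 1 - j) * p.coeff (j + 1) := by
      rw [← Finset.Ico_add_one_right_eq_Icc, Finset.sum_Ico_eq_sum_range]
      refine Finset.sum_congr rfl fun i hi => ?_
      have hi' := Finset.mem_range.mp hi
      rw [hcw_def]
      simp only
      rw [if_pos (by omega : 1 + i ≤ t)]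
      have he : t - (1 + i) = t - 1 - i := by omega
      rw [he, mul_comm]
      congr 2
      omega
    have h3 : ∑ j ∈ Finset.Icc 1 t, p.coeff j * cw t j
        = ∑ j ∈ Finset.Icc 1 (max n t), p.coeff j * cw t j := by
      refine Finset.sum_subset (Finset.Icc_subset_Icc_right (le_max_right n t)) ?_
      intro j hj hj'
      have hcond : ¬ j ≤ t := by
        simp only [Finset.mem_Icc] at hj hj'
        omega
      rw [hcw_def]
      simp only
      rw [if_neg hcond, mul_zero]
    have h4 : ∑ j ∈ Finset.Icc 1 n, p.coeff j * cw t j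
        = ∑ j ∈ Finset.Icc 1 (max n t), p.coeff j * cw t j := by
      refine Finset.sum_subset (Finset.Icc_subset_Icc_right (le_max_left n t)) ?_
      intro j hj hj'
      have hjn : n < j := by
        simp only [Finset.mem_Icc] at hj hj'
        omega
      rw [Polynomial.coeff_eq_zero_of_natDegree_lt (by rw [hn]; exact hjn), zero_mul]
    rw [h1, h1', ← h2, h3, ← h4]
  have key4 : ∀ t, ϑ * c t
      = a.coeff t - d t - ∑ j ∈ Finset.Icc 1 n, p.coeff j * cw t j := by
    intro t
    have h1 := key1 t 0
    rw [Nat.add_zero] at h1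
    have h2 : (B t).coeff 0 = d t + ϑ * c t := hrep ((B t).coeff 0)
    rw [← key3 t]
    linear_combination h1 - h2
  -- input complexity
  set L : ℕ := a.natDegree with hL_def
  have hcoefΔ : ∀ x : 𝒪, ∃ k, x ∈ SD k := by
    intro x
    have hx : x ∈ AddSubmonoid.closure (Δ : Set 𝒪) := by rw [hgen]; exact AddSubmonoid.mem_top x
    obtain ⟨l, hl, hsum⟩ := AddSubmonoid.exists_list_of_mem_closure hx
    refine ⟨l.length, ?_⟩
    rw [← hsum]
    exact sumsOf_list hΔ0' l hl
  choose kf hkf using hcoefΔ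
  set h : ℕ := (Finset.range (L+1)).sup (fun t => kf (a.coeff t)) with hh_def
  have hinput : ∀ t, t ≤ L → a.coeff t ∈ SD h := by
    intro t ht
    exact hSDmono (Finset.le_sup (f := fun t => kf (a.coeff t))
      (Finset.mem_range.mpr (by omega))) (hkf _)
  have hinput0 : ∀ t, L < t → a.coeff t = 0 := fun t ht =>
    Polynomial.coeff_eq_zero_of_natDegree_lt ht
  -- size functions
  set g : ℕ → ℕ := fun t => h * (min t L + 1) with hg_def
  set G : ℕ → ℕ := fun t => if t = 0 then 0 else g (t-1) with hG_def
  have hgmono : ∀ {s t : ℕ}, s ≤ t → g s ≤ g t := by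
    intro s t hst
    rw [hg_def]
    exact Nat.mul_le_mul_left h (by
      have : min s L ≤ min t L := min_le_min hst (le_refl L)
      omega)
  have hgK : ∀ t, g t ≤ h * (L + 1) := by
    intro t
    rw [hg_def]
    exact Nat.mul_le_mul_left h (by
      have : min t L ≤ L := min_le_right t L
      omega)
  have hGg : ∀ t, G t ≤ g t := by
    intro t
    simp only [hG_def]
    split
    · exact Nat.zero_le _
    · exact hgmono (Nat.sub_le t 1)
  have harith : ∀ t, (if t ≤ L then h else 0) + G t ≤ g t := by
    intro t
    simp only [hG_def, hg_def]
    rcases Nat.eq_zero_or_pos t with rfl | ht0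
    · simp
    · rw [if_neg (by omega : ¬ t = 0)]
      by_cases htL : t ≤ L
      · rw [if_pos htL, Nat.min_eq_left (by omega : t - 1 ≤ L), Nat.min_eq_left htL]
        have h3 : t - 1 + 1 = t := by omega
        rw [h3]
        have h4 : h + h * t = h * (t + 1) := by ring
        omega
      · rw [if_neg htL, Nat.min_eq_right (by omega : L ≤ t - 1),
          Nat.min_eq_right (by omega : L ≤ t)]
        omega
  -- THE ORBIT INVARIANT
  have key5 : ∀ t, ∃ x y, x ∈ SD (g t) ∧ y ∈ SD (g t) ∧ c t = x - y := by
    intro t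
    induction t using Nat.strong_induction_on with
    | _ t ih =>
      have hwin : ∀ j : ℕ, ∃ x y, x ∈ SD (G t) ∧ y ∈ SD (G t) ∧ (1 ≤ j → cw t j = x - y) := by
        intro j
        by_cases hj : 1 ≤ j ∧ j ≤ t
        · obtain ⟨x, y, hx, hy, hxy⟩ := ih (t - j) (by omega)
          have hle : g (t - j) ≤ G t := by
            simp only [hG_def]
            rw [if_neg (by omega : ¬ t = 0)]
            exact hgmono (by omega)
          refine ⟨x, y, hSDmono hle hx, hSDmono hle hy, fun _ => ?_⟩
          rw [hcw_def]
          simp only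
          rw [if_pos hj.2]
          exact hxy
        · refine ⟨0, 0, hSD0 _, hSD0 _, fun hj1 => ?_⟩
          have : ¬ j ≤ t := by omega
          rw [hcw_def]
          simp only
          rw [if_neg this, sub_zero]
      choose xw yw hxw hyw hcweq using hwin
      have hWsplit : ∑ j ∈ Finset.Icc 1 n, p.coeff j * cw t j
          = (∑ j ∈ Finset.Icc 1 n, p.coeff j * xw j)
            - (∑ j ∈ Finset.Icc 1 n, p.coeff j * yw j) := by
        rw [← Finset.sum_sub_distrib]
        exact Finset.sum_congr rfl fun j hj => by
          rw [hcweq j (Finset.mem_Icc.mp hj).1, mul_sub]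
      set U : 𝒪 := ∑ j ∈ Finset.Icc 1 n, p.coeff j * xw j with hU_def
      set V : 𝒪 := ∑ j ∈ Finset.Icc 1 n, p.coeff j * yw j with hV_def
      have hUmem : U ∈ SZ (G t) := regroup _ xw hxw
      have hVmem : V ∈ SZ (G t) := regroup _ yw hyw
      have haZ : a.coeff t ∈ SZ (if t ≤ L then h else 0) := by
        by_cases ht : t ≤ L
        · rw [if_pos ht]; exact hSDZ _ (hinput t ht)
        · rw [if_neg ht, hinput0 t (by omega)]; exact hSZ0 0
      have hPmem : a.coeff t + V ∈ SZ ((if t ≤ L then h else 0) + G t) :=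
        sumsOf_add haZ hVmem
      obtain ⟨A₁, α, hA₁, hα, heq1⟩ := fold1 _ (a.coeff t + V) 0 hPmem hD0
      obtain ⟨A₂, β, hA₂, hβ, heq2⟩ := fold1 _ U (d t) hUmem (hdD t)
      rw [add_zero] at heq1
      have hrel := key4 t
      rw [hWsplit] at hrel
      -- ϑ c t = a.coeff t − d t − (U − V)
      have hAB : A₁ - A₂ = ϑ * (c t + β - α) := by linear_combination -heq1 + heq2 - hrel
      have hABeq : A₁ = A₂ := huniq A₁ A₂ hA₁ hA₂ ⟨c t + β - α, hAB⟩
      have hct : c t = α - β := by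
        apply hcan
        rw [hABeq] at hAB
        linear_combination -hAB
      have hαg : α ∈ SD (g t) := hSDmono (harith t) hα
      have hβg : β ∈ SD (g t) := hSDmono (le_trans (hGg t) (le_refl _)) hβ
      exact ⟨α, β, hαg, hβg, hct⟩
  -- STAGE RULE I
  have ruleI : ∀ (A1 B1 T : ℕ), L + 1 ≤ T →
      (∀ t, T ≤ t → ∃ x y ε, x ∈ SD A1 ∧ y ∈ SD B1 ∧ (ε = (0:𝒪) ∨ ε = 1) ∧ c t = x - y - ε) →
      (∀ t, T + n ≤ t → ∃ x y, x ∈ SD B1 ∧ y ∈ SD A1 ∧ c t = x - y) := by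
    intro A1 B1 T hT hst t ht
    have hwin : ∀ j : ℕ, ∃ x y ε, (x ∈ SD A1 ∧ y ∈ SD B1 ∧ (ε = (0:𝒪) ∨ ε = 1))
        ∧ (j ∈ Finset.Icc 1 n → cw t j = x - y - ε) := by
      intro j
      by_cases hj : j ∈ Finset.Icc 1 n
      · have hj' := Finset.mem_Icc.mp hj
        obtain ⟨x, y, ε, hx, hy, hε, hceq⟩ := hst (t - j) (by omega)
        refine ⟨x, y, ε, ⟨hx, hy, hε⟩, fun _ => ?_⟩
        rw [hcw_def]
        simp only
        rw [if_pos (by omega : j ≤ t)]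
        exact hceq
      · exact ⟨0, 0, 0, ⟨hSD0 _, hSD0 _, Or.inl rfl⟩, fun hjj => absurd hjj hj⟩
    choose xw yw εw hmem hcweq using hwin
    have hWsplit : ∑ j ∈ Finset.Icc 1 n, p.coeff j * cw t j
        = (∑ j ∈ Finset.Icc 1 n, p.coeff j * xw j)
          - (∑ j ∈ Finset.Icc 1 n, p.coeff j * yw j)
          - (∑ j ∈ Finset.Icc 1 n, p.coeff j * εw j) := by
      rw [← Finset.sum_sub_distrib, ← Finset.sum_sub_distrib]
      exact Finset.sum_congr rfl fun j hj => by rw [hcweq j hj]; ring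
    have hUmem : (∑ j ∈ Finset.Icc 1 n, p.coeff j * xw j) ∈ SZ A1 :=
      regroup _ xw (fun j => (hmem j).1)
    have hVmem : (∑ j ∈ Finset.Icc 1 n, p.coeff j * yw j) ∈ SZ B1 :=
      regroup _ yw (fun j => (hmem j).2.1)
    have hsD : (∑ j ∈ Finset.Icc 1 n, p.coeff j * εw j) ∈ D :=
      hsubsum εw (fun j => (hmem j).2.2)
    have hrel := key4 t
    rw [hinput0 t (by omega), hWsplit] at hrel
    obtain ⟨A₁, β, hA₁, hβ, heq1⟩ := fold1 _ _ _ hVmem hsD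
    obtain ⟨A₂, α, hA₂, hα, heq2⟩ := fold1 _ _ (d t) hUmem (hdD t)
    have hAB : A₁ - A₂ = ϑ * (c t + α - β) := by linear_combination -heq1 + heq2 - hrel
    have hABeq : A₁ = A₂ := huniq A₁ A₂ hA₁ hA₂ ⟨_, hAB⟩
    have hct : c t = β - α := by
      apply hcan
      rw [hABeq] at hAB
      linear_combination -hAB
    exact ⟨β, α, hβ, hα, hct⟩
  -- STAGE RULE II
  have ruleII : ∀ (A1 B1 T : ℕ), L + 1 ≤ T →
      (∀ t, T ≤ t → ∃ x y, x ∈ SD A1 ∧ y ∈ SD (B1+1) ∧ c t = x - y) →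
      (∀ t, T + n ≤ t →
        ∃ x y ε, x ∈ SD B1 ∧ y ∈ SD A1 ∧ (ε = (0:𝒪) ∨ ε = 1) ∧ c t = x - y - ε) := by
    intro A1 B1 T hT hst t ht
    have hwin : ∀ j : ℕ, ∃ x y, (x ∈ SD A1 ∧ y ∈ SD (B1+1))
        ∧ (j ∈ Finset.Icc 1 n → cw t j = x - y) := by
      intro j
      by_cases hj : j ∈ Finset.Icc 1 n
      · have hj' := Finset.mem_Icc.mp hj
        obtain ⟨x, y, hx, hy, hceq⟩ := hst (t - j) (by omega)
        refine ⟨x, y, ⟨hx, hy⟩, fun _ => ?_⟩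
        rw [hcw_def]
        simp only
        rw [if_pos (by omega : j ≤ t)]
        exact hceq
      · exact ⟨0, 0, ⟨hSD0 _, hSD0 _⟩, fun hjj => absurd hjj hj⟩
    choose xw yw hmem hcweq using hwin
    have hWsplit : ∑ j ∈ Finset.Icc 1 n, p.coeff j * cw t j
        = (∑ j ∈ Finset.Icc 1 n, p.coeff j * xw j)
          - (∑ j ∈ Finset.Icc 1 n, p.coeff j * yw j) := by
      rw [← Finset.sum_sub_distrib]
      exact Finset.sum_congr rfl fun j hj => by rw [hcweq j hj]; ring
    have hUmem : (∑ j ∈ Finset.Icc 1 n, p.coeff j * xw j) ∈ SZ A1 :=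
      regroup _ xw (fun j => (hmem j).1)
    have hVmem : (∑ j ∈ Finset.Icc 1 n, p.coeff j * yw j) ∈ SZ (B1+1) :=
      regroup _ yw (fun j => (hmem j).2)
    have hrel := key4 t
    rw [hinput0 t (by omega), hWsplit] at hrel
    obtain ⟨A₁, γ, ε, hA₁, hγ, hε, heq1⟩ := fold2 _ _ hVmem
    obtain ⟨A₂, α, hA₂, hα, heq2⟩ := fold1 _ _ (d t) hUmem (hdD t)
    have hAB : A₁ - A₂ = ϑ * (c t + α - γ + ε) := by linear_combination -heq1 + heq2 - hrel
    have hABeq : A₁ = A₂ := huniq A₁ A₂ hA₁ hA₂ ⟨_, hAB⟩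
    have hct : c t = γ - α - ε := by
      apply hcan
      rw [hABeq] at hAB
      linear_combination -hAB
    exact ⟨γ, α, ε, hγ, hα, hε, hct⟩
  -- DESCENT
  have descent : ∀ (S A1 B1 T : ℕ), A1 + B1 ≤ S → L + 1 ≤ T →
      (∀ t, T ≤ t → ∃ x y, x ∈ SD A1 ∧ y ∈ SD B1 ∧ c t = x - y) →
      ∃ T', ∀ t, T' ≤ t → c t = 0 := by
    intro S
    induction S with
    | zero =>
        intro A1 B1 T hAB hT hst
        refine ⟨T, fun t ht => ?_⟩
        obtain ⟨x, y, hx, hy, hceq⟩ := hst t ht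
        have hA0 : A1 = 0 := by omega
        have hB0 : B1 = 0 := by omega
        rw [hA0] at hx
        rw [hB0] at hy
        rw [hceq, eq_zero_of_mem_sumsOf_zero hx, eq_zero_of_mem_sumsOf_zero hy, sub_zero]
    | succ S ih =>
        intro A1 B1 T hAB hT hst
        rcases Nat.eq_zero_or_pos B1 with hB0 | hB1
        · rcases Nat.eq_zero_or_pos A1 with hA0 | hA1
          · exact ih A1 B1 T (by omega) hT hst
          · -- B1 = 0, A1 ≥ 1
            have st1 : ∀ t, T ≤ t → ∃ x y ε, x ∈ SD A1 ∧ y ∈ SD B1 ∧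
                (ε = (0:𝒪) ∨ ε = 1) ∧ c t = x - y - ε := by
              intro t ht
              obtain ⟨x, y, hx, hy, hceq⟩ := hst t ht
              exact ⟨x, y, 0, hx, hy, Or.inl rfl, by rw [hceq]; ring⟩
            have st2 := ruleI A1 B1 T hT st1
            -- st2 : ST0 B1 A1 (T+n) with A1 = (A1-1)+1
            have hA1' : A1 - 1 + 1 = A1 := by omega
            rw [← hA1'] at st2
            have st3 := ruleII B1 (A1-1) (T+n) (by omega) st2
            have st4 := ruleI (A1-1) B1 (T+n+n) (by omega) st3
            exact ih B1 (A1-1) (T+n+n+n) (by omega) (by omega) st4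
        · -- B1 ≥ 1
          have hB1' : B1 - 1 + 1 = B1 := by omega
          rw [← hB1'] at hst
          have st2 := ruleII A1 (B1-1) T hT hst
          have st3 := ruleI (B1-1) A1 (T+n) (by omega) st2
          exact ih A1 (B1-1) (T+n+n) (by omega) (by omega) st3
  -- put everything together
  have st0 : ∀ t, L + 1 ≤ t →
      ∃ x y, x ∈ SD (h * (L+1)) ∧ y ∈ SD (h * (L+1)) ∧ c t = x - y := by
    intro t ht
    obtain ⟨x, y, hx, hy, hceq⟩ := key5 t
    exact ⟨x, y, hSDmono (hgK t) hx, hSDmono (hgK t) hy, hceq⟩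
  obtain ⟨T', hT'⟩ := descent (h * (L+1) + h * (L+1)) (h * (L+1)) (h * (L+1)) (L+1)
    (le_refl _) (le_refl _) st0
  set ℓ : ℕ := T' + n + L + 1 with hℓ_def
  have hBzero : B ℓ = 0 := by
    apply Polynomial.ext
    intro i
    rw [key1 ℓ i]
    have ha0 : a.coeff (ℓ + i) = 0 := hinput0 _ (by omega)
    have hsum0 : ∑ s ∈ Finset.range ℓ, c s * p.coeff (ℓ + i - s) = 0 := by
      apply Finset.sum_eq_zero
      intro s hs
      have hs' := Finset.mem_range.mp hs
      by_cases hsT : T' ≤ s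
      · rw [hT' s hsT, zero_mul]
      · have hbig : n < ℓ + i - s := by omega
        rw [Polynomial.coeff_eq_zero_of_natDegree_lt (by rw [hn]; exact hbig), mul_zero]
    rw [ha0, hsum0]
    simp
  refine ⟨ℓ, d, fun j _ => hdD j, ?_⟩
  have htel := key2 ℓ
  rw [hBzero, mul_zero, add_zero] at htel
  exact ⟨∑ s ∈ Finset.range ℓ, C (c s) * X ^ s, by linear_combination htel⟩
end

section
/- Let 𝕂 = ℚ, 𝒪 = ℤ, and fix 0 < ε < 1 with fundamental domain ℱ_ε = [−ε, 1−ε) ⊂ ℝ. For every monic p ∈ ℤ[x] there exists M ∈ ℕ such that for all integers m with |m| ≥ M, the pair (p(x) + m·sgn, D_{ℱ_ε, p(0)+m·sgn}) is a GNS with finiteness property for both signs; i.e., (p(x) + m, D) and (p(x) − m, D′) both have the finiteness property for m ≥ M, with the respective digit sets D = (( p(0)+m)·ℱ_ε) ∩ ℤ and D′ = ((p(0)−m)·ℱ_ε) ∩ ℤ. -/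
/-!
Write `θ = q(0)` and `q₁ = q.divX`, so that `q = X q₁ + θ`. On polynomials of degree `< n = deg q`
the weight `w(a) = ∑_{j < n} 2^j |a_j|` satisfies `w(a) = |a₀| + 2 w(a.divX)`. A division step
`a = d + X b + k q`, with `d` the digit of `a₀` modulo `θ`, has `b = a.divX - k q₁`, hence
`w(b) ≤ w(a.divX) + |k| w(q₁)` with `|k θ| ≤ |a₀| + |θ|`. If `|θ| > 2 w(q₁)`, this forces
`w(b) < w(a)` as long as `w(a) > 2 w(q₁)`; once `w(a) ≤ 2 w(q₁)`, every coefficient of `a` is itself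
a digit, provided the digits contain `[-2 w(q₁), 2 w(q₁)]`. For the digits `θ ℱ_ε ∩ ℤ` both
conditions hold when `|θ|` is large, and replacing `p` by `p ± m` changes only `θ`.
-/

open Polynomial

open Finset

section DigitExpansion

variable {R : Type*} [CommRing R] {p : R[X]} {D : Set R}

theorem HasRep.of_dvd_sub {a a' : R[X]} (h : p ∣ a - a') (h' : HasRep p D a') : HasRep p D a := by
  obtain ⟨ℓ, d, hd, hdvd⟩ := h'
  exact ⟨ℓ, d, hd, by simpa using dvd_add h hdvd⟩

theorem hasRep_of_coeff_mem {a : R[X]} {n : ℕ} (ha : a.natDegree < n)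
    (hD : ∀ j < n, a.coeff j ∈ D) : HasRep p D a :=
  ⟨n, a.coeff, hD, by rw [← as_sum_range_C_mul_X_pow' a ha, sub_self]; exact dvd_zero p⟩

theorem HasRep.cons {a b : R[X]} {d k : R} (hd : d ∈ D) (hb : HasRep p D b)
    (h : a = C d + X * b + C k * p) : HasRep p D a := by
  obtain ⟨ℓ, e, he, hdvd⟩ := hb
  refine ⟨ℓ + 1, fun j => if j = 0 then d else e (j - 1), fun j hj => ?_, ?_⟩
  · rcases j with _ | j
    · simpa using hd
    · simpa using he j (by omega)
  · set S := ∑ j ∈ range ℓ, C (e j) * X ^ j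
    have hsum :
        ∑ j ∈ range (ℓ + 1), C (if j = 0 then d else e (j - 1)) * X ^ j = C d + X * S := by
      rw [sum_range_succ', mul_sum]
      simp only [Nat.add_eq_zero_iff, one_ne_zero, and_false, if_false, Nat.add_sub_cancel,
        if_true, pow_zero, mul_one, pow_succ]
      rw [add_comm]
      exact congrArg _ (sum_congr rfl fun j _ => by ring)
    rw [hsum, h, show C d + X * b + C k * p - (C d + X * S) = X * (b - S) + p * C k by ring]
    exact dvd_add (dvd_mul_of_dvd_right hdvd X) (dvd_mul_right p _)

theorem finitenessProperty_C {θ : R} (hD : ∀ z : R, ∃ d ∈ D, θ ∣ z - d) :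
    FinitenessProperty (C θ) D := by
  choose digit hdigit hdvd using hD
  intro a
  refine ⟨a.natDegree + 1, fun j => digit (a.coeff j), fun j _ => hdigit _, ?_⟩
  nth_rewrite 1 [as_sum_range_C_mul_X_pow a]
  rw [← sum_sub_distrib]
  refine dvd_sum fun j _ => ?_
  rw [← sub_mul, ← C_sub]
  exact dvd_mul_of_dvd_left (map_dvd C (hdvd _)) _

end DigitExpansion

section CoeffWeight

def coeffWeight (n : ℕ) (a : ℤ[X]) : ℤ := ∑ j ∈ range n, 2 ^ j * |a.coeff j|

variable {n : ℕ}

theorem coeffWeight_nonneg (a : ℤ[X]) : 0 ≤ coeffWeight n a :=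
  sum_nonneg fun _ _ => by positivity

theorem abs_coeff_le_coeffWeight (a : ℤ[X]) {j : ℕ} (hj : j < n) :
    |a.coeff j| ≤ coeffWeight n a :=
  calc |a.coeff j| ≤ 2 ^ j * |a.coeff j| :=
        le_mul_of_one_le_left (abs_nonneg _) (one_le_pow₀ one_le_two)
    _ ≤ coeffWeight n a := single_le_sum (f := fun j => 2 ^ j * |a.coeff j|)
        (fun _ _ => by positivity) (mem_range.2 hj)

theorem coeffWeight_sub_C_mul_le (f g : ℤ[X]) (k : ℤ) :
    coeffWeight n (f - C k * g) ≤ coeffWeight n f + |k| * coeffWeight n g := by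
  rw [coeffWeight, coeffWeight, coeffWeight, mul_sum, ← sum_add_distrib]
  gcongr with j
  rw [coeff_sub, coeff_C_mul]
  calc 2 ^ j * |f.coeff j - k * g.coeff j| ≤ 2 ^ j * (|f.coeff j| + |k| * |g.coeff j|) := by
        gcongr; exact (abs_sub _ _).trans_eq (by rw [abs_mul])
    _ = _ := by ring

theorem coeffWeight_eq_abs_coeff_zero_add {a : ℤ[X]} (ha : a.coeff n = 0) :
    coeffWeight n a = |a.coeff 0| + 2 * coeffWeight n a.divX := by
  have h : coeffWeight n a = ∑ j ∈ range (n + 1), 2 ^ j * |a.coeff j| := by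
    rw [sum_range_succ, ha, abs_zero, mul_zero, add_zero, coeffWeight]
  rw [h, sum_range_succ', coeffWeight, mul_sum]
  simp only [coeff_divX, pow_succ, pow_zero, one_mul]
  rw [add_comm]
  exact congrArg _ (sum_congr rfl fun j _ => by ring)

theorem coeffWeight_divX_sub_lt {a : ℤ[X]} {q : ℤ[X]} {k : ℤ} (ha : a.coeff n = 0)
    (hθ : 2 * coeffWeight n q.divX < |q.coeff 0|)
    (hk : |k| * |q.coeff 0| ≤ |a.coeff 0| + |q.coeff 0|)
    (hbig : 2 * coeffWeight n q.divX < coeffWeight n a) :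
    coeffWeight n (a.divX - C k * q.divX) < coeffWeight n a := by
  have hb := coeffWeight_sub_C_mul_le (n := n) a.divX q.divX k
  have hQ := coeffWeight_nonneg (n := n) q.divX
  have hA := coeffWeight_nonneg (n := n) a.divX
  have hx := abs_nonneg (a.coeff 0)
  rw [coeffWeight_eq_abs_coeff_zero_add ha] at hbig ⊢
  nlinarith [abs_nonneg k]

end CoeffWeight

section DominantConstantTerm

variable {q : ℤ[X]} {D : Set ℤ}

theorem exists_digit_step (hD : ∀ z, ∃ d ∈ D, q.coeff 0 ∣ z - d) (a : ℤ[X]) :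
    ∃ d ∈ D, ∃ k : ℤ, a.coeff 0 - d = q.coeff 0 * k ∧
      a = C d + X * (a.divX - C k * q.divX) + C k * q := by
  obtain ⟨d, hd, k, hk⟩ := hD (a.coeff 0)
  refine ⟨d, hd, k, hk, ?_⟩
  have hkC : C (a.coeff 0) - C d = C (q.coeff 0) * C k := by rw [← C_sub, ← C_mul, hk]
  linear_combination -(divX_mul_X_add a) + C k * divX_mul_X_add q + hkC

theorem hasRep_of_natDegree_lt (hD : ∀ z, ∃ d ∈ D, q.coeff 0 ∣ z - d)
    (hD_lt : ∀ d ∈ D, |d| < |q.coeff 0|)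
    (hD_small : ∀ z : ℤ, |z| ≤ 2 * coeffWeight q.natDegree q.divX → z ∈ D)
    (a : ℤ[X]) (ha : a.natDegree < q.natDegree) : HasRep q D a := by
  by_cases hsmall : coeffWeight q.natDegree a ≤ 2 * coeffWeight q.natDegree q.divX
  · exact hasRep_of_coeff_mem ha fun j hj =>
      hD_small _ ((abs_coeff_le_coeffWeight a hj).trans hsmall)
  obtain ⟨d, hd, k, hk, hstep⟩ := exists_digit_step hD a
  have hQ := coeffWeight_nonneg (n := q.natDegree) q.divX
  have hθ : 2 * coeffWeight q.natDegree q.divX < |q.coeff 0| := by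
    have := hD_lt _
      (hD_small (2 * coeffWeight q.natDegree q.divX) (abs_of_nonneg (by omega)).le)
    rwa [abs_of_nonneg (by omega)] at this
  have hk_abs : |k| * |q.coeff 0| ≤ |a.coeff 0| + |q.coeff 0| := by
    rw [mul_comm, ← abs_mul, ← hk]
    exact (abs_sub _ _).trans (by linarith [hD_lt d hd])
  have hb_deg : (a.divX - C k * q.divX).natDegree < q.natDegree := by
    refine (natDegree_sub_le _ _).trans_lt (max_lt ?_ ((natDegree_C_mul_le _ _).trans_lt ?_)) <;>
      rw [natDegree_divX_eq_natDegree_tsub_one] <;> omega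
  have hlt :=
    coeffWeight_divX_sub_lt (coeff_eq_zero_of_natDegree_lt ha) hθ hk_abs (not_le.1 hsmall)
  exact HasRep.cons hd (hasRep_of_natDegree_lt hD hD_lt hD_small _ hb_deg) hstep
termination_by (coeffWeight q.natDegree a).toNat
decreasing_by have := coeffWeight_nonneg (n := q.natDegree) (a.divX - C k * q.divX); omega

theorem finitenessProperty_of_abs_le_mem (hq : q.Monic) (hn : 0 < q.natDegree)
    (hD : ∀ z, ∃ d ∈ D, q.coeff 0 ∣ z - d) (hD_lt : ∀ d ∈ D, |d| < |q.coeff 0|)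
    (hD_small : ∀ z : ℤ, |z| ≤ 2 * coeffWeight q.natDegree q.divX → z ∈ D) :
    FinitenessProperty q D := fun a =>
  have hq1 : q ≠ 1 := fun h => by simp [h] at hn
  (hasRep_of_natDegree_lt hD hD_lt hD_small _ (natDegree_modByMonic_lt a hq hq1)).of_dvd_sub
    ⟨a /ₘ q, by linear_combination -(modByMonic_add_div a q)⟩

end DominantConstantTerm

section DigitSet

def digitSet (ε : ℝ) (θ : ℤ) : Set ℤ :=
  {τ : ℤ | ∃ r ∈ Set.Ico (-ε) (1 - ε), (τ : ℝ) = (θ : ℝ) * r}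

variable {ε : ℝ} {θ : ℤ}

theorem exists_mem_digitSet_dvd_sub (ε : ℝ) (hθ : θ ≠ 0) (z : ℤ) :
    ∃ d ∈ digitSet ε θ, θ ∣ z - d := by
  set k : ℤ := ⌊(z : ℝ) / θ + ε⌋
  have hθ' : (θ : ℝ) ≠ 0 := Int.cast_ne_zero.2 hθ
  refine ⟨z - θ * k, ⟨z / θ - k, ⟨?_, ?_⟩, ?_⟩, ⟨k, by ring⟩⟩
  · linarith [Int.floor_le ((z : ℝ) / θ + ε)]
  · linarith [Int.lt_floor_add_one ((z : ℝ) / θ + ε)]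
  · push_cast
    field_simp

theorem abs_lt_of_mem_digitSet (hε0 : 0 ≤ ε) (hε1 : ε < 1) (hθ : θ ≠ 0) {d : ℤ}
    (hd : d ∈ digitSet ε θ) : |d| < |θ| := by
  obtain ⟨r, ⟨hr0, hr1⟩, hdr⟩ := hd
  have hr : |r| < 1 := abs_lt.2 ⟨by linarith, by linarith⟩
  have hθ' : (0 : ℝ) < |(θ : ℝ)| := abs_pos.2 (Int.cast_ne_zero.2 hθ)
  have : |(d : ℝ)| < |(θ : ℝ)| := by
    rw [hdr, abs_mul]
    exact mul_lt_of_lt_one_right hθ' hr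
  exact_mod_cast this

theorem mem_digitSet_of_abs_lt {z : ℤ} (hz : |(z : ℝ)| < min ε (1 - ε) * |(θ : ℝ)|) :
    z ∈ digitSet ε θ := by
  have hθ : (0 : ℝ) < |(θ : ℝ)| := by
    by_contra h
    rw [abs_nonpos_iff.1 (not_lt.1 h), abs_zero, mul_zero] at hz
    exact (abs_nonneg _).not_gt hz
  have hzθ : |(z : ℝ) / θ| < min ε (1 - ε) := by rwa [abs_div, div_lt_iff₀ hθ]
  refine ⟨z / θ, ⟨?_, ?_⟩, by field_simp [abs_pos.1 hθ]⟩
  · linarith [neg_abs_le ((z : ℝ) / θ), min_le_left ε (1 - ε)]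
  · linarith [le_abs_self ((z : ℝ) / θ), min_le_right ε (1 - ε)]

theorem finitenessProperty_digitSet {q : ℤ[X]} (hε0 : 0 ≤ ε) (hε1 : ε < 1) (hq : q.Monic)
    (hn : 0 < q.natDegree)
    (hθ : 2 * (coeffWeight q.natDegree q.divX : ℝ) < min ε (1 - ε) * |(q.coeff 0 : ℝ)|) :
    FinitenessProperty q (digitSet ε (q.coeff 0)) := by
  have hθ0 : q.coeff 0 ≠ 0 := by
    intro h
    rw [h, Int.cast_zero, abs_zero, mul_zero] at hθ
    linarith [(Int.cast_nonneg (R := ℝ) (coeffWeight_nonneg (n := q.natDegree) q.divX))]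
  refine finitenessProperty_of_abs_le_mem hq hn (exists_mem_digitSet_dvd_sub ε hθ0)
    (fun d hd => abs_lt_of_mem_digitSet hε0 hε1 hθ0 hd) fun z hz => mem_digitSet_of_abs_lt ?_
  refine lt_of_le_of_lt ?_ hθ
  rw [← Int.cast_abs]
  exact_mod_cast hz

end DigitSet

theorem finitenessProperty_add_C_digitSet {ε : ℝ} {p : ℤ[X]} (hε0 : 0 < ε) (hε1 : ε < 1)
    (hp : p.Monic) (hn : 0 < p.natDegree) {c : ℕ}
    (hc : 2 * (coeffWeight p.natDegree p.divX : ℝ) / min ε (1 - ε) < c) {z : ℤ}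
    (hz : c + |p.coeff 0| ≤ |z|) :
    FinitenessProperty (p + C z) (digitSet ε (p.coeff 0 + z)) := by
  have hpz : (p + C z).Monic :=
    hp.add_of_left (degree_C_le.trans_lt (natDegree_pos_iff_degree_pos.1 hn))
  have hdivX : (p + C z).divX = p.divX := by rw [divX_add, divX_C, add_zero]
  have := finitenessProperty_digitSet hε0.le hε1 hpz (by rwa [natDegree_add_C]) ?_
  · rwa [coeff_add, coeff_C_zero] at this
  rw [natDegree_add_C, hdivX, coeff_add, coeff_C_zero]
  have hθ : (c : ℝ) ≤ |((p.coeff 0 + z : ℤ) : ℝ)| := by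
    rw [← Int.cast_abs]
    have := abs_sub_abs_le_abs_sub z (-p.coeff 0)
    rw [abs_neg, sub_neg_eq_add, add_comm] at this
    exact_mod_cast (by linarith : (c : ℤ) ≤ |p.coeff 0 + z|)
  have hμ : 0 < min ε (1 - ε) := lt_min hε0 (by linarith)
  rw [div_lt_iff₀ hμ] at hc
  exact hc.trans_le (by rw [mul_comm]; gcongr)

/-- Let `𝒪 = ℤ`, fix `0 < ε < 1` and `ℱ_ε = [−ε, 1−ε)`. For every monic
`p ∈ ℤ[x]` there exists `M ∈ ℕ` such that for all integers `m ≥ M` both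
`(p(x) + m, D)` and `(p(x) − m, D′)` have the finiteness property, where
`D = ((p(0)+m)·ℱ_ε) ∩ ℤ` and `D′ = ((p(0)−m)·ℱ_ε) ∩ ℤ`. -/
theorem statement15 (ε : ℝ) (hε0 : 0 < ε) (hε1 : ε < 1)
    (p : Polynomial ℤ) (hp : p.Monic) :
    ∃ M : ℕ, ∀ m : ℤ, (M : ℤ) ≤ m →
      FinitenessProperty (p + Polynomial.C m)
        {τ : ℤ | ∃ r ∈ Set.Ico (-ε) (1 - ε), (τ : ℝ) = ((p.coeff 0 + m : ℤ) : ℝ) * r} ∧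
      FinitenessProperty (p - Polynomial.C m)
        {τ : ℤ | ∃ r ∈ Set.Ico (-ε) (1 - ε), (τ : ℝ) = ((p.coeff 0 - m : ℤ) : ℝ) * r} := by
  rcases Nat.eq_zero_or_pos p.natDegree with hn | hn
  · have hpC : p = C (p.coeff 0) := eq_C_of_natDegree_eq_zero hn
    have hp1 : p.coeff 0 = 1 := by simpa [hn] using hp.coeff_natDegree
    refine ⟨2, fun m hm => ⟨?_, ?_⟩⟩
    · rw [show p + C m = C (p.coeff 0 + m) by rw [C_add, ← hpC]]
      exact finitenessProperty_C (exists_mem_digitSet_dvd_sub ε (by omega))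
    · rw [show p - C m = C (p.coeff 0 - m) by rw [C_sub, ← hpC]]
      exact finitenessProperty_C (exists_mem_digitSet_dvd_sub ε (by omega))
  · obtain ⟨c, hc⟩ := exists_nat_gt (2 * (coeffWeight p.natDegree p.divX : ℝ) / min ε (1 - ε))
    refine ⟨c + (p.coeff 0).natAbs, fun m hm => ⟨?_, ?_⟩⟩
    · exact finitenessProperty_add_C_digitSet hε0 hε1 hp hn hc
        (by rw [Int.abs_eq_natAbs, abs_of_nonneg (by omega)]; omega)
    · rw [sub_eq_add_neg p, ← C_neg, sub_eq_add_neg (p.coeff 0)]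
      exact finitenessProperty_add_C_digitSet hε0 hε1 hp hn hc
        (by rw [Int.abs_eq_natAbs, abs_neg, abs_of_nonneg (by omega)]; omega)
end

section
/- Let p(x) = x² − 2x + 2 ∈ ℤ[x] and for m ≥ 0 consider q_m(x) = p(x) + m = x² − 2x + (2 + m) with canonical digit set 𝒟_m = {0, 1, …, m+1}. Then for no m ≥ 0 does (q_m, 𝒟_m) have the finiteness property; indeed, the polynomial a(x) = x − 1 (equivalently, the element x − 1 of ℤ[x]/(q_m)) admits no finite representation with digits in 𝒟_m. -/
open Polynomial

private lemma cancelX16 (m : ℕ) (f : Polynomial ℤ)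
    (h : (X ^ 2 - 2 * X + C (2 + (m : ℤ))) ∣ X * f) :
    (X ^ 2 - 2 * X + C (2 + (m : ℤ))) ∣ f := by
  obtain ⟨g, hg⟩ := h
  have hg0 : eval 0 g = 0 := by
    have := congrArg (eval 0) hg
    simp at this
    have hm : (0:ℤ) < 2 + (m:ℤ) := by positivity
    rcases this with h2 | h2
    · omega
    · exact h2
  have : X ∣ g := by
    rw [X_dvd_iff, coeff_zero_eq_eval_zero, hg0]
  obtain ⟨g', rfl⟩ := this
  refine ⟨g', mul_left_cancel₀ (X_ne_zero) ?_⟩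
  rw [hg]; ring

private lemma main16 (m : ℕ) : ∀ ℓ : ℕ, ∀ d : ℕ → ℤ,
    (∀ j < ℓ, 0 ≤ d j ∧ d j ≤ (m : ℤ) + 1) →
    ¬ (X ^ 2 - 2 * X + C (2 + (m : ℤ))) ∣
      (X - 1 - ∑ j ∈ Finset.range ℓ, C (d j) * X ^ j) := by
  intro ℓ
  induction ℓ with
  | zero =>
    intro d _ h
    simp only [Finset.range_zero, Finset.sum_empty, sub_zero] at h
    have h1 : ((X : ℤ[X]) - 1) ≠ 0 := by
      rw [show ((X : ℤ[X]) - 1) = X - C 1 by simp]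
      exact X_sub_C_ne_zero 1
    have h2 := natDegree_le_of_dvd h h1
    have h3 : ((X : ℤ[X]) ^ 2 - 2 * X + C (2 + (m : ℤ))).natDegree = 2 := by
      compute_degree!
    have h4 : ((X : ℤ[X]) - 1).natDegree = 1 := by
      rw [show ((X : ℤ[X]) - 1) = X - C 1 by simp]
      exact natDegree_X_sub_C 1
    omega
  | succ ℓ IH =>
    intro d hd h
    have hd0 : d 0 = (m : ℤ) + 1 := by
      have he : ((2 : ℤ) + m) ∣ eval 0 (X - 1 - ∑ j ∈ Finset.range (ℓ+1), C (d j) * X ^ j) := by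
        have := eval_dvd (x := (0:ℤ)) h
        simpa using this
      have hev : eval 0 ((X:ℤ[X]) - 1 - ∑ j ∈ Finset.range (ℓ+1), C (d j) * X ^ j)
          = -1 - d 0 := by
        have hz : ∀ j ∈ Finset.range ℓ, eval 0 (C (d (j+1)) * X ^ (j+1)) = 0 :=
          fun j _ => by simp
        rw [Finset.sum_range_succ', eval_sub, eval_sub, eval_add, eval_finset_sum,
          Finset.sum_eq_zero hz]
        simp
      rw [hev] at he
      have he' : ((2 : ℤ) + m) ∣ (1 + d 0) := by
        have := he.neg_right
        simpa [neg_sub, add_comm] using (dvd_neg.mpr he)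
      have hb := hd 0 (by omega)
      have hle : (2 : ℤ) + m ≤ 1 + d 0 := Int.le_of_dvd (by linarith [hb.1]) he'
      linarith [hb.2]
    have hs : ∑ j ∈ Finset.range ℓ, C (d (j+1)) * X ^ (j+1)
        = X * ∑ j ∈ Finset.range ℓ, C (d (j+1)) * X ^ j := by
      rw [Finset.mul_sum]
      exact Finset.sum_congr rfl (fun j _ => by ring)
    have heq : X * (X - 1 - ∑ j ∈ Finset.range ℓ, C (d (j+1)) * X ^ j)
        = (X - 1 - ∑ j ∈ Finset.range (ℓ+1), C (d j) * X ^ j)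
          + (X ^ 2 - 2 * X + C (2 + (m : ℤ))) := by
      rw [Finset.sum_range_succ', hs, hd0]
      simp only [pow_zero, mul_one, C_add, C_1]
      have hc2 : (C (2 : ℤ) : ℤ[X]) = 2 := by norm_num
      rw [hc2]
      ring
    have hX : (X ^ 2 - 2 * X + C (2 + (m : ℤ))) ∣
        X * (X - 1 - ∑ j ∈ Finset.range ℓ, C (d (j+1)) * X ^ j) := by
      rw [heq]; exact dvd_add h (dvd_refl _)
    exact IH (fun j => d (j+1)) (fun j hj => hd (j+1) (by omega)) (cancelX16 m _ hX)

/-- For `p(x) = x² − 2x + 2` and `q_m(x) = p(x) + m = x² − 2x + (2+m)`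
with canonical digit set `𝒟_m = {0, 1, …, m+1}`, the pair `(q_m, 𝒟_m)` never has the
finiteness property, for any `m ≥ 0`; indeed `x − 1` admits no finite digit
representation modulo `q_m`. -/
theorem statement16 :
    ∀ m : ℕ,
      ¬ HasRep (Polynomial.X ^ 2 - 2 * Polynomial.X + Polynomial.C (2 + (m : ℤ)))
          {d : ℤ | 0 ≤ d ∧ d ≤ (m : ℤ) + 1} (Polynomial.X - 1) ∧
      ¬ FinitenessProperty
          (Polynomial.X ^ 2 - 2 * Polynomial.X + Polynomial.C (2 + (m : ℤ)))
          {d : ℤ | 0 ≤ d ∧ d ≤ (m : ℤ) + 1} := by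
  intro m
  have hmain : ¬ HasRep (X ^ 2 - 2 * X + C (2 + (m : ℤ)))
      {d : ℤ | 0 ≤ d ∧ d ≤ (m : ℤ) + 1} (X - 1) := by
    rintro ⟨ℓ, d, hd, hdvd⟩
    exact main16 m ℓ d (fun j hj => hd j hj) hdvd
  exact ⟨hmain, fun hfin => hmain (hfin (X - 1))⟩
end
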